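/- arXiv:1506.08220 — 7 statements merged into one kernel-verified Lean document; each statement's English description precedes it below -/
import Mathlib

section
/- Let A be a finite-dimensional commutative (not necessarily associative or unital) algebra over a field F, and let e ∈ A be an idempotent such that ad(e) is diagonalisable. Then e associates with its {1,0}-eigenspace, i.e. e·(x·z) = (e·x)·z for all x ∈ A and all z ∈ A^e_1 + A^e_0, if and only if the eigenspaces of e satisfy the Seress fusion rules, i.e. for every φ ∈ F, every x ∈ A^e_φ and every z ∈ A^e_1 + A^e_0 one has x·z ∈ A^e_φ. -/
/-!
For a `φ`-eigenvector `x` of `ad e` we have `(e * x) * z = φ • (x * z)`, so `e` associates with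
`x` at `z` exactly when `x * z` is again a `φ`-eigenvector. Associating at `z` is a linear
condition on `x`, so it holds on all of `A` once it holds on every eigenspace, as these span `A`.
-/

open Module.End

section EigenspaceAssociativity

variable {R A : Type*} [CommRing R] [NonUnitalNonAssocRing A] [Module R A]
  [SMulCommClass R A A] [IsScalarTower R A A] {e : A}

theorem mul_mem_eigenspace_mul_iff {φ : R} {x : A} (hx : x ∈ eigenspace (LinearMap.mul R A e) φ)
    (z : A) :
    x * z ∈ eigenspace (LinearMap.mul R A e) φ ↔ e * (x * z) = (e * x) * z := by
  rw [mem_eigenspace_iff, LinearMap.mul_apply'] at hx ⊢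
  rw [hx, smul_mul_assoc]

def assocDefect (e z : A) : A →ₗ[R] A :=
  LinearMap.mul R A e ∘ₗ LinearMap.mulRight R z - LinearMap.mulRight R z ∘ₗ LinearMap.mul R A e

theorem mem_ker_assocDefect {z x : A} :
    x ∈ LinearMap.ker (assocDefect (R := R) e z) ↔ e * (x * z) = (e * x) * z := by
  simp [assocDefect, sub_eq_zero]

theorem mul_assoc_of_forall_eigenspace
    (hdiag : (⨆ φ : R, eigenspace (LinearMap.mul R A e) φ) = ⊤) {z : A}
    (h : ∀ φ : R, ∀ x ∈ eigenspace (LinearMap.mul R A e) φ, e * (x * z) = (e * x) * z) (x : A) :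
    e * (x * z) = (e * x) * z := by
  have hker : LinearMap.ker (assocDefect (R := R) e z) = ⊤ :=
    eq_top_iff.2 <| hdiag ▸ iSup_le fun φ y hy => mem_ker_assocDefect.2 (h φ y hy)
  exact mem_ker_assocDefect.1 (hker ▸ Submodule.mem_top)

end EigenspaceAssociativity

theorem seress_iff_assoc_general {F : Type*} [Field F] {A : Type*} [NonUnitalNonAssocRing A]
    [Module F A] [SMulCommClass F A A] [IsScalarTower F A A]
    (e : A)
    (hdiag : (⨆ φ : F, Module.End.eigenspace (LinearMap.mul F A e) φ) = ⊤) :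
    (∀ x z : A,
        z ∈ Module.End.eigenspace (LinearMap.mul F A e) 1 ⊔
            Module.End.eigenspace (LinearMap.mul F A e) 0 →
        e * (x * z) = (e * x) * z) ↔
      (∀ (φ : F) (x z : A),
        x ∈ Module.End.eigenspace (LinearMap.mul F A e) φ →
        z ∈ Module.End.eigenspace (LinearMap.mul F A e) 1 ⊔
            Module.End.eigenspace (LinearMap.mul F A e) 0 →
        x * z ∈ Module.End.eigenspace (LinearMap.mul F A e) φ) := by
  constructor
  · intro hassoc φ x z hx hz
    exact (mul_mem_eigenspace_mul_iff hx z).2 (hassoc x z hz)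
  · intro hfusion x z hz
    exact mul_assoc_of_forall_eigenspace hdiag
      (fun φ y hy => (mul_mem_eigenspace_mul_iff hy z).1 (hfusion φ y z hy hz)) x

/-- for an idempotent `e` with diagonalisable adjoint in a
finite-dimensional commutative algebra, `e` associates with its `{1,0}`-eigenspace
iff the eigenspaces of `e` satisfy the Seress fusion rules. -/
theorem seress_iff_assoc {F : Type*} [Field F] {A : Type*} [NonUnitalNonAssocRing A]
    [Module F A] [SMulCommClass F A A] [IsScalarTower F A A] [FiniteDimensional F A]
    (comm : ∀ a b : A, a * b = b * a)
    (e : A) (he : e * e = e)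
    (hdiag : (⨆ φ : F, Module.End.eigenspace (LinearMap.mul F A e) φ) = ⊤) :
    (∀ x z : A,
        z ∈ Module.End.eigenspace (LinearMap.mul F A e) 1 ⊔
            Module.End.eigenspace (LinearMap.mul F A e) 0 →
        e * (x * z) = (e * x) * z) ↔
      (∀ (φ : F) (x z : A),
        x ∈ Module.End.eigenspace (LinearMap.mul F A e) φ →
        z ∈ Module.End.eigenspace (LinearMap.mul F A e) 1 ⊔
            Module.End.eigenspace (LinearMap.mul F A e) 0 →
        x * z ∈ Module.End.eigenspace (LinearMap.mul F A e) φ) :=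
  seress_iff_assoc_general e hdiag
end

section
/- Let A be a finite-dimensional commutative (not necessarily associative or unital) algebra over a field F, and let e, f ∈ A be idempotents with e·f = f. Suppose that ad(e) and ad(f) are diagonalisable and that f associates with its {1,0}-eigenspace, i.e. f·(x·z) = (f·x)·z for all x ∈ A and z ∈ A^f_1 + A^f_0. Then e − f is an idempotent and ad(e − f) is diagonalisable. -/
/-!
Since `f·(e - f) = 0`, the element `e - f` lies in the `0`-eigenspace of `ad f`, so `f` associates
with it and `ad f` commutes with `ad (e - f)`, hence also with `ad e = ad (e - f) + ad f`.
Commuting diagonalisable endomorphisms are simultaneously diagonalisable, so their difference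
`ad e - ad f = ad (e - f)` is diagonalisable.
-/

namespace Module.End

variable {K V : Type*} [Field K] [AddCommGroup V] [Module K V]

lemma eigenspace_inf_eigenspace_le_sub (g h : End K V) (φ ψ : K) :
    g.eigenspace φ ⊓ h.eigenspace ψ ≤ (g - h).eigenspace (φ - ψ) := by
  intro v hv
  obtain ⟨hg, hh⟩ := Submodule.mem_inf.mp hv
  rw [mem_eigenspace_iff] at hg hh ⊢
  rw [LinearMap.sub_apply, hg, hh, sub_smul]

lemma iSup_eigenspace_sub_eq_top_of_commute [FiniteDimensional K V] {g h : End K V}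
    (hgh : Commute g h) (hg : ⨆ φ, g.eigenspace φ = ⊤) (hh : ⨆ ψ, h.eigenspace ψ = ⊤) :
    ⨆ μ, (g - h).eigenspace μ = ⊤ := by
  have split (φ : K) : g.eigenspace φ = ⨆ ψ, g.eigenspace φ ⊓ h.eigenspace ψ :=
    Submodule.eq_iSup_inf_genEigenspace 1 (mapsTo_genEigenspace_of_comm hgh φ 1) hh
  rw [eq_top_iff, ← hg]
  refine iSup_le fun φ => (split φ).le.trans <| iSup_le fun ψ => ?_
  exact (eigenspace_inf_eigenspace_le_sub g h φ ψ).trans (le_iSup _ (φ - ψ))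

end Module.End

lemma LinearMap.commute_mul_of_mul_assoc {R A : Type*} [CommSemiring R]
    [NonUnitalNonAssocSemiring A] [Module R A] [SMulCommClass R A A] [IsScalarTower R A A]
    (comm : ∀ a b : A, a * b = b * a) {f u : A} (h : ∀ x, f * (x * u) = (f * x) * u) :
    Commute (LinearMap.mul R A f) (LinearMap.mul R A u) := by
  ext x
  simp only [Module.End.mul_apply, LinearMap.mul_apply']
  rw [comm u x, h, comm _ u]

/-- if `e, f` are idempotents with `e·f = f`, `ad e` and `ad f` are
diagonalisable, and `f` associates with its `{1,0}`-eigenspace, then `e - f` is an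
idempotent with diagonalisable adjoint. -/
theorem sub_idem_diagonalisable {F : Type*} [Field F] {A : Type*} [NonUnitalNonAssocRing A]
    [Module F A] [SMulCommClass F A A] [IsScalarTower F A A] [FiniteDimensional F A]
    (comm : ∀ a b : A, a * b = b * a)
    (e f : A) (he : e * e = e) (hf : f * f = f) (hef : e * f = f)
    (hde : (⨆ φ : F, Module.End.eigenspace (LinearMap.mul F A e) φ) = ⊤)
    (hdf : (⨆ φ : F, Module.End.eigenspace (LinearMap.mul F A f) φ) = ⊤)
    (hfassoc : ∀ x z : A,
        z ∈ Module.End.eigenspace (LinearMap.mul F A f) 1 ⊔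
            Module.End.eigenspace (LinearMap.mul F A f) 0 →
        f * (x * z) = (f * x) * z) :
    (e - f) * (e - f) = e - f ∧
      (⨆ φ : F, Module.End.eigenspace (LinearMap.mul F A (e - f)) φ) = ⊤ := by
  have hfe : f * e = f := comm f e ▸ hef
  have h0 : e - f ∈ Module.End.eigenspace (LinearMap.mul F A f) 0 := by
    rw [Module.End.mem_eigenspace_iff, LinearMap.mul_apply', mul_sub, hfe, hf, sub_self,
      zero_smul]
  have hcomm : Commute (LinearMap.mul F A f) (LinearMap.mul F A (e - f)) :=
    LinearMap.commute_mul_of_mul_assoc comm fun x =>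
      hfassoc x (e - f) (Submodule.mem_sup_right h0)
  have hcomm' : Commute (LinearMap.mul F A e) (LinearMap.mul F A f) := by
    simpa only [map_sub, sub_add_cancel] using (hcomm.symm.add_left (Commute.refl _))
  refine ⟨IsIdempotentElem.sub hf he hfe hef, ?_⟩
  rw [map_sub]
  exact Module.End.iSup_eigenspace_sub_eq_top_of_commute hcomm' hde hdf
end

section
/- Let A be a finite-dimensional commutative (not necessarily associative or unital) algebra over a field F, and let e, f ∈ A be idempotents with e·f = f such that ad(e) and ad(f) are diagonalisable and both e and f associate with their respective {1,0}-eigenspaces. If moreover A^{e−f}_1 + A^{e−f}_0 ⊆ (A^e_1 + A^e_0) ∩ (A^f_1 + A^f_0), then e − f associates with its {1,0}-eigenspace, i.e. (e−f)·(x·z) = ((e−f)·x)·z for all x ∈ A and all z ∈ A^{e−f}_1 + A^{e−f}_0. -/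
/-- if `e, f` are idempotents with `e·f = f`, both with diagonalisable
adjoints and both associating with their `{1,0}`-eigenspaces, and if the
`{1,0}`-eigenspace of `e - f` is contained in the intersection of those of `e` and `f`,
then `e - f` associates with its `{1,0}`-eigenspace. -/
theorem sub_idem_seress {F : Type*} [Field F] {A : Type*} [NonUnitalNonAssocRing A]
    [Module F A] [SMulCommClass F A A] [IsScalarTower F A A] [FiniteDimensional F A]
    (comm : ∀ a b : A, a * b = b * a)
    (e f : A) (he : e * e = e) (hf : f * f = f) (hef : e * f = f)
    (hde : (⨆ φ : F, Module.End.eigenspace (LinearMap.mul F A e) φ) = ⊤)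
    (hdf : (⨆ φ : F, Module.End.eigenspace (LinearMap.mul F A f) φ) = ⊤)
    (heassoc : ∀ x z : A,
        z ∈ Module.End.eigenspace (LinearMap.mul F A e) 1 ⊔
            Module.End.eigenspace (LinearMap.mul F A e) 0 →
        e * (x * z) = (e * x) * z)
    (hfassoc : ∀ x z : A,
        z ∈ Module.End.eigenspace (LinearMap.mul F A f) 1 ⊔
            Module.End.eigenspace (LinearMap.mul F A f) 0 →
        f * (x * z) = (f * x) * z)
    (hincl : Module.End.eigenspace (LinearMap.mul F A (e - f)) 1 ⊔
          Module.End.eigenspace (LinearMap.mul F A (e - f)) 0 ≤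
        (Module.End.eigenspace (LinearMap.mul F A e) 1 ⊔
            Module.End.eigenspace (LinearMap.mul F A e) 0) ⊓
          (Module.End.eigenspace (LinearMap.mul F A f) 1 ⊔
            Module.End.eigenspace (LinearMap.mul F A f) 0)) :
    ∀ x z : A,
      z ∈ Module.End.eigenspace (LinearMap.mul F A (e - f)) 1 ⊔
          Module.End.eigenspace (LinearMap.mul F A (e - f)) 0 →
      (e - f) * (x * z) = ((e - f) * x) * z := by
  intro x z hz
  obtain ⟨hze, hzf⟩ := hincl hz
  rw [sub_mul, sub_mul, sub_mul, heassoc x z hze, hfassoc x z hzf]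
end

section
/- Let n ≥ 1, let F be a field of characteristic ≠ 2 and α ∈ F with 1 + α(n−1) ≠ 0. Then the Matsuo algebra M_α(𝒜_n) over F is unital with identity element u = (1 + α(n−1))⁻¹ Σ_{t ∈ T_n} t, i.e. u·x = x for every x ∈ M_α(𝒜_n). -/
/-! The transpositions collinear with a fixed transposition `t` are the swaps `(z y)` with `z` in
the support of `t` and `y` outside it; there are `2(n - 1)` of them, and `s ↦ s ∧ t` permutes
them. Summing `s·t = (α/2)(s + t - s ∧ t)` over them, the `s` and `s ∧ t` terms cancel, so
`∑ₛ s·t = t + (α/2)·2(n - 1)·t = (1 + α(n - 1)) t`. -/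

open Equiv Finsupp

instance {n : ℕ} : DecidablePred (Equiv.Perm.IsSwap : Equiv.Perm (Fin n) → Prop) := by
  intro σ; unfold Equiv.Perm.IsSwap; infer_instance

abbrev Tr (n : ℕ) : Type := {σ : Equiv.Perm (Fin (n + 1)) // σ.IsSwap}

/-- Two transpositions are collinear when their supports share exactly one point. -/
def Coll {n : ℕ} (s t : Tr n) : Prop :=
  (s.1.support ∩ t.1.support).card = 1

instance {n : ℕ} (s t : Tr n) : Decidable (Coll s t) := by
  unfold Coll; infer_instance

/-- The third point `s·t·s` of the line through collinear transpositions. -/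
def wedge {n : ℕ} (s t : Tr n) : Tr n :=
  ⟨s.1 * t.1 * s.1, by
    obtain ⟨x, y, hxy, ht⟩ := t.2
    obtain ⟨a, b, hab, hs⟩ := s.2
    have hinv : s.1⁻¹ = s.1 := by rw [hs]; exact Equiv.swap_inv a b
    exact ⟨s.1 x, s.1 y, fun h => hxy (s.1.injective h), by
      rw [ht, Equiv.swap_apply_apply, hinv]⟩⟩

variable (F : Type*) [Field F]

/-- Product of two basis points of the Matsuo algebra of the Fischer
space `𝒜_n` of `Sym(n+1)`. -/
noncomputable def pointMul {n : ℕ} (α : F) (s t : Tr n) : Tr n →₀ F :=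
  if s = t then Finsupp.single s 1
  else if Coll s t then
    (α / 2) • (Finsupp.single s 1 + Finsupp.single t 1 - Finsupp.single (wedge s t) 1)
  else 0

/-- The multiplication of the Matsuo algebra `M_α(𝒜_n)`, as a bilinear map on the
free module on the transpositions of `Sym(n+1)`. -/
noncomputable def matsuoMul (n : ℕ) (α : F) :
    (Tr n →₀ F) →ₗ[F] (Tr n →₀ F) →ₗ[F] (Tr n →₀ F) :=
  Finsupp.lsum F fun s =>
    LinearMap.toSpanSingleton F _
      (Finsupp.lsum F fun t => LinearMap.toSpanSingleton F _ (pointMul F α s t))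

theorem Finset.card_pair_inter_eq_one_iff {α : Type*} [DecidableEq α] {a b : α} (hab : a ≠ b)
    (T : Finset α) : ({a, b} ∩ T).card = 1 ↔ a ∈ T ∧ b ∉ T ∨ b ∈ T ∧ a ∉ T := by
  by_cases ha : a ∈ T <;> by_cases hb : b ∈ T <;>
    simp [Finset.insert_inter_of_mem, Finset.insert_inter_of_notMem, ha, hb, hab]

section Transpositions

variable {n : ℕ}

lemma coll_iff {s t : Tr n} :
    Coll s t ↔ ∃ z ∈ t.1.support, ∃ y ∉ t.1.support, s.1 = swap z y := by
  constructor
  · obtain ⟨a, b, hab, hs⟩ := s.2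
    rw [Coll, hs, Perm.support_swap hab, Finset.card_pair_inter_eq_one_iff hab]
    rintro (⟨ha, hb⟩ | ⟨hb, ha⟩)
    · exact ⟨a, ha, b, hb, rfl⟩
    · exact ⟨b, hb, a, ha, swap_comm a b⟩
  · rintro ⟨z, hz, y, hy, hs⟩
    have hzy := ne_of_mem_of_not_mem hz hy
    rw [Coll, hs, Perm.support_swap hzy, Finset.card_pair_inter_eq_one_iff hzy]
    exact Or.inl ⟨hz, hy⟩

lemma not_coll_self (t : Tr n) : ¬ Coll t t := by
  obtain ⟨a, b, hab, ht⟩ := t.2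
  rw [Coll, Finset.inter_self, ht, Perm.card_support_swap hab]
  decide

lemma exists_swap_of_coll {s t : Tr n} (h : Coll s t) :
    ∃ z w y, z ≠ w ∧ z ≠ y ∧ w ≠ y ∧ s.1 = swap z y ∧ t.1 = swap z w := by
  obtain ⟨z, hz, y, hy, hs⟩ := coll_iff.mp h
  obtain ⟨a, b, hab, ht⟩ := t.2
  have hT : t.1.support = {a, b} := by rw [ht, Perm.support_swap hab]
  rw [hT] at hz hy
  simp only [Finset.mem_insert, Finset.mem_singleton, not_or] at hz hy
  rcases hz with rfl | rfl
  · exact ⟨z, b, y, hab, fun h => hy.1 h.symm, fun h => hy.2 h.symm, hs, ht⟩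
  · exact ⟨z, a, y, hab.symm, fun h => hy.2 h.symm, fun h => hy.1 h.symm, hs,
      ht.trans (swap_comm a z)⟩

lemma coe_wedge_of_eq_swap {s t : Tr n} {z w y : Fin (n + 1)} (hzw : z ≠ w) (hwy : w ≠ y)
    (hs : s.1 = swap z y) (ht : t.1 = swap z w) : (wedge s t).1 = swap w y := by
  change s.1 * t.1 * s.1 = _
  rw [hs, ht, swap_comm z w, swap_mul_swap_mul_swap hzw.symm hwy, swap_comm]

lemma coll_wedge_of_coll {s t : Tr n} (h : Coll s t) : Coll (wedge s t) t := by
  obtain ⟨z, w, y, hzw, hzy, hwy, hs, ht⟩ := exists_swap_of_coll h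
  have hT : t.1.support = {z, w} := by rw [ht, Perm.support_swap hzw]
  refine coll_iff.mpr ⟨w, by simp [hT], y, ?_, coe_wedge_of_eq_swap hzw hwy hs ht⟩
  simp [hT, hzy.symm, hwy.symm]

lemma wedge_wedge_of_coll {s t : Tr n} (h : Coll s t) : wedge (wedge s t) t = s := by
  obtain ⟨z, w, y, hzw, hzy, hwy, hs, ht⟩ := exists_swap_of_coll h
  apply Subtype.ext
  change (wedge s t).1 * t.1 * (wedge s t).1 = s.1
  rw [coe_wedge_of_eq_swap hzw hwy hs ht, ht, hs, swap_mul_swap_mul_swap hzw hzy, swap_comm]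

lemma eq_of_swap_eq_swap_of_mem_of_notMem {α : Type*} [DecidableEq α] {T : Finset α}
    {z z' y y' : α} (hz : z ∈ T) (hy : y ∉ T) (hy' : y' ∉ T) (h : swap z y = swap z' y') :
    z = z' ∧ y = y' := by
  have hzz' : z = z' := by
    by_contra hne
    have : swap z' y' z = y := by rw [← h, swap_apply_left]
    rw [swap_apply_of_ne_of_ne hne (ne_of_mem_of_not_mem hz hy')] at this
    exact ne_of_mem_of_not_mem hz hy this
  subst hzz'
  exact ⟨rfl, swap_injective_of_left z h⟩

open Finset in
lemma card_coll_add_two (t : Tr n) : #{s | Coll s t} + 2 = 2 * n := by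
  have hT : #t.1.support = 2 := by
    obtain ⟨a, b, hab, ht⟩ := t.2
    rw [ht, Perm.card_support_swap hab]
  have hle : #t.1.support ≤ n + 1 := by simpa using card_le_univ t.1.support
  have hbij : #(t.1.support ×ˢ t.1.supportᶜ) = #{s | Coll s t} := by
    refine card_bij (fun p hp => ⟨swap p.1 p.2, p.1, p.2, ?_, rfl⟩) ?_ ?_ ?_
    · rw [mem_product, mem_compl] at hp
      exact ne_of_mem_of_not_mem hp.1 hp.2
    · intro p hp
      rw [mem_product, mem_compl] at hp
      exact mem_filter.mpr ⟨mem_univ _, coll_iff.mpr ⟨p.1, hp.1, p.2, hp.2, rfl⟩⟩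
    · intro p hp q hq hpq
      rw [mem_product, mem_compl] at hp hq
      obtain ⟨h1, h2⟩ := eq_of_swap_eq_swap_of_mem_of_notMem hp.1 hp.2 hq.2 congr($hpq.1)
      exact Prod.ext h1 h2
    · intro s hs
      obtain ⟨z, hz, y, hy, hsz⟩ := coll_iff.mp (mem_filter.mp hs).2
      exact ⟨(z, y), mem_product.mpr ⟨hz, mem_compl.mpr hy⟩, Subtype.ext hsz.symm⟩
  rw [← hbij, card_product, card_compl, hT, Fintype.card_fin]
  omega

end Transpositions

section MatsuoAlgebra

open Finset

variable {F} {n : ℕ}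

lemma sum_single_wedge_coll (t : Tr n) :
    ∑ s with Coll s t, single (wedge s t) (1 : F) = ∑ s with Coll s t, single s 1 := by
  have hmem : ∀ s ∈ ({s | Coll s t} : Finset (Tr n)),
      wedge s t ∈ ({s | Coll s t} : Finset _) :=
    fun s hs => mem_filter.mpr ⟨mem_univ _, coll_wedge_of_coll (mem_filter.mp hs).2⟩
  exact sum_nbij' (wedge · t) (wedge · t) hmem hmem
    (fun s hs => wedge_wedge_of_coll (mem_filter.mp hs).2)
    (fun s hs => wedge_wedge_of_coll (mem_filter.mp hs).2) fun _ _ => rfl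

lemma sum_pointMul_left (hchar : (2 : F) ≠ 0) (α : F) (t : Tr n) :
    ∑ s, pointMul F α s t = (1 + α * ((n : F) - 1)) • single t 1 := by
  have hsplit : ∀ s, pointMul F α s t = (if s = t then single t 1 else 0) +
      if Coll s t then (α / 2) • (single s 1 + single t 1 - single (wedge s t) 1) else 0 := by
    intro s
    unfold pointMul
    split_ifs with hst hc <;> simp_all [not_coll_self]
  have hcoll : ∑ s with Coll s t, (single s 1 + single t 1 - single (wedge s t) (1 : F)) =
      #{s | Coll s t} • single t 1 := by
    rw [sum_sub_distrib, sum_add_distrib, sum_single_wedge_coll, sum_const]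
    abel
  have hcard : α / 2 * #{s | Coll s t} = α * ((n : F) - 1) := by
    have hcast : (#{s | Coll s t} : F) + 2 = 2 * n := by
      simpa using congrArg (Nat.cast (R := F)) (card_coll_add_two t)
    field_simp
    linear_combination α * hcast
  rw [sum_congr rfl fun s _ => hsplit s, sum_add_distrib, Finset.sum_ite_eq',
    if_pos (mem_univ _), ← sum_filter, ← Finset.smul_sum, hcoll, ← Nat.cast_smul_eq_nsmul F,
    smul_smul, hcard, add_smul, one_smul]

lemma matsuoMul_single_single (α : F) (s t : Tr n) (c d : F) :
    matsuoMul F n α (single s c) (single t d) = (c * d) • pointMul F α s t := by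
  rw [matsuoMul, lsum_single, LinearMap.toSpanSingleton_apply, LinearMap.smul_apply,
    lsum_single, LinearMap.toSpanSingleton_apply, smul_smul]

lemma matsuoMul_sum_single_left (hchar : (2 : F) ≠ 0) (α : F) (t : Tr n) :
    matsuoMul F n α (∑ s, single s 1) (single t 1) =
      (1 + α * ((n : F) - 1)) • single t 1 := by
  simp only [map_sum, LinearMap.sum_apply, matsuoMul_single_single, one_mul, one_smul]
  exact sum_pointMul_left hchar α t

end MatsuoAlgebra

theorem matsuo_An_unital_general (n : ℕ) (F : Type*) [Field F]
    (hchar : (2 : F) ≠ 0) (α : F) (hα : 1 + α * ((n : F) - 1) ≠ 0) :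
    ∀ x : Tr n →₀ F,
      matsuoMul F n α
        ((1 + α * ((n : F) - 1))⁻¹ • ∑ t : Tr n, Finsupp.single t (1 : F)) x = x := by
  suffices h :
      matsuoMul F n α ((1 + α * ((n : F) - 1))⁻¹ • ∑ t, single t 1) = LinearMap.id from
    LinearMap.congr_fun h
  refine lhom_ext' fun t => LinearMap.ext_ring ?_
  rw [LinearMap.comp_apply, lsingle_apply, map_smul, LinearMap.smul_apply,
    matsuoMul_sum_single_left hchar, smul_smul, inv_mul_cancel₀ hα, one_smul]
  rfl

/-- for `n ≥ 1` and `1 + α(n-1) ≠ 0`, the Matsuo algebra `M_α(𝒜_n)` over a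
field of characteristic `≠ 2` is unital with identity
`(1 + α(n-1))⁻¹ ∑_{t ∈ T_n} t`. -/
theorem matsuo_An_unital (n : ℕ) (hn : 1 ≤ n) (F : Type*) [Field F]
    (hchar : (2 : F) ≠ 0) (α : F) (hα : 1 + α * ((n : F) - 1) ≠ 0) :
    ∀ x : Tr n →₀ F,
      matsuoMul F n α
        ((1 + α * ((n : F) - 1))⁻¹ • ∑ t : Tr n, Finsupp.single t (1 : F)) x = x :=
  matsuo_An_unital_general n F hchar α hα
end

section
/- For n ≥ 4, let Γ be the simple graph whose vertices are the pairs (p,ε) with p a 2-element subset of {1,…,n} and ε ∈ {+1,−1}, where (p,ε) and (q,η) are adjacent if and only if p ≠ q and |p ∩ q| = 1 (the collinearity graph of the Fischer space 𝒟_n of the Weyl group of type D_n). The characteristic polynomial of the adjacency matrix of Γ over ℚ is (X − (4n−8))·(X − (2n−8))^{n−1}·(X + 4)^{n(n−3)/2}·X^{n(n−1)/2}. -/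
open Polynomial

/-- The vertices of the collinearity graph of the Fischer space `𝒟_n`: pairs `(p, ε)`
with `p` a 2-element subset of `{1, …, n}` and `ε ∈ {+1, -1}`. -/
abbrev DnVert (n : ℕ) : Type := {p : Finset (Fin n) // p.card = 2} × ℤˣ

/-- The adjacency matrix of the collinearity graph of `𝒟_n`: `(p, ε)` and `(q, η)` are
adjacent exactly when `p ≠ q` and `p, q` share exactly one point. -/
def dnAdj (n : ℕ) : Matrix (DnVert n) (DnVert n) ℚ :=
  Matrix.of fun p q => if p.1 ≠ q.1 ∧ (p.1.1 ∩ q.1.1).card = 1 then 1 else 0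

/-! Forgetting the sign, `dnAdj n` is the adjacency matrix `T` of the triangular graph (the line
graph of `K_n`) blown up along the fibres `{±1}`, so its spectrum is that of `2T` together with
`n(n-1)/2` zeros. With `N` the point–pair incidence matrix, `NᵀN = T + 2` and
`NNᵀ = J + (n - 2)` where `J` is the all-ones matrix; since `NᵀN` and `NNᵀ` share their nonzero
spectrum and `J` has spectrum `n, 0, …, 0`, the spectrum of `2T` is
`4n - 8, (2n - 8)^(n-1), (-4)^(n(n-3)/2)`. -/

open Matrix Finset

namespace Matrix

variable {R : Type*} [CommRing R] {n : Type*} [Fintype n] [DecidableEq n]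

theorem charpoly_add_scalar (M : Matrix n n R) (μ : R) :
    (M + scalar n μ).charpoly = M.charpoly.comp (X - C μ) := by
  rw [← add_sub_cancel_right M (scalar n μ), charpoly_sub_scalar, comp_assoc]
  simp

theorem charpoly_vecMulVec_add_scalar [Nonempty n] (u v : n → R) (μ : R) :
    (vecMulVec u v + scalar n μ).charpoly =
      (X - C μ) ^ (Fintype.card n - 1) * (X - C (u ⬝ᵥ v + μ)) := by
  obtain ⟨k, hk⟩ : ∃ k, Fintype.card n = k + 1 := Nat.exists_eq_add_one.mpr Fintype.card_pos
  rw [charpoly_add_scalar, charpoly_vecMulVec, hk, Nat.add_sub_cancel, pow_succ, smul_eq_C_mul]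
  simp only [sub_comp, mul_comp, pow_comp, X_comp, C_comp, C_add]
  ring

theorem charpoly_submatrix_fst {κ F : Type*} [Fintype κ] [DecidableEq κ] [Fintype F]
    [DecidableEq F] [Nonempty F] (A : Matrix κ κ R) :
    (A.submatrix Prod.fst Prod.fst : Matrix (κ × F) (κ × F) R).charpoly =
      X ^ (Fintype.card κ * (Fintype.card F - 1)) * (Fintype.card F • A).charpoly := by
  let B : Matrix (κ × F) κ R := (1 : Matrix κ κ R).submatrix Prod.fst id
  let A' : Matrix κ (κ × F) R := A.submatrix id Prod.fst
  have hBA : B * A' = A.submatrix Prod.fst Prod.fst := by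
    ext v w
    simp [B, A', mul_apply, one_apply]
  have hAB : A' * B = Fintype.card F • A := by
    ext p q
    simp [B, A', mul_apply, Fintype.sum_prod_type, one_apply]
  have hcard : Fintype.card κ ≤ Fintype.card (κ × F) := by
    rw [Fintype.card_prod]
    exact Nat.le_mul_of_pos_right _ Fintype.card_pos
  rw [← hBA, charpoly_mul_comm_of_le _ _ hcard, hAB, Fintype.card_prod, Nat.mul_sub_one]

end Matrix

theorem Nat.choose_two_eq_of_three_le {n : ℕ} (hn : 3 ≤ n) :
    n.choose 2 = n * (n - 3) / 2 + n := by
  obtain ⟨m, rfl⟩ := Nat.exists_eq_add_of_le' hn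
  rw [Nat.choose_two_right, show m + 3 - 1 = m + 2 by omega, Nat.add_sub_cancel,
    show (m + 3) * (m + 2) = (m + 3) * m + 2 * (m + 3) by ring, Nat.add_mul_div_left _ _ two_pos]

abbrev TwoSubset (n : ℕ) : Type := {p : Finset (Fin n) // p.card = 2}

theorem TwoSubset.card_inter_eq_two_iff {n : ℕ} {p q : TwoSubset n} :
    #(p.1 ∩ q.1) = 2 ↔ p = q := by
  refine ⟨fun h => Subtype.ext ?_, fun h => by rw [h, inter_self, q.2]⟩
  have hp := eq_of_subset_of_card_le inter_subset_left (h.trans p.2.symm).ge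
  have hq := eq_of_subset_of_card_le inter_subset_right (h.trans q.2.symm).ge
  exact hp.symm.trans hq

section TriangularGraph

variable (R : Type*) [CommRing R] (n : ℕ)

def pairIncidence : Matrix (Fin n) (TwoSubset n) R := of fun i p => if i ∈ p.1 then 1 else 0

def triangularAdj : Matrix (TwoSubset n) (TwoSubset n) R :=
  of fun p q => if p ≠ q ∧ #(p.1 ∩ q.1) = 1 then 1 else 0

theorem pairIncidence_transpose_mul_self :
    (pairIncidence R n)ᵀ * pairIncidence R n = triangularAdj R n + scalar _ 2 := by
  ext p q
  have hcount : ((pairIncidence R n)ᵀ * pairIncidence R n) p q = #(p.1 ∩ q.1) := by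
    simp only [pairIncidence, mul_apply, transpose_apply, of_apply, mul_ite, mul_one, mul_zero,
      ← ite_and, sum_boole]
    congr 2
    ext
    simp [and_comm]
  have hle : #(p.1 ∩ q.1) ≤ 2 := (card_le_card inter_subset_left).trans p.2.le
  rw [hcount]
  by_cases hpq : p = q
  · subst hpq
    simp [triangularAdj, p.2]
  · have hne : #(p.1 ∩ q.1) ≠ 2 := mt TwoSubset.card_inter_eq_two_iff.mp hpq
    interval_cases h : #(p.1 ∩ q.1) <;> simp_all [triangularAdj]

theorem pairIncidence_mul_transpose :
    pairIncidence R n * (pairIncidence R n)ᵀ = vecMulVec 1 1 + scalar _ ((n : R) - 2) := by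
  ext i j
  have hcount : (pairIncidence R n * (pairIncidence R n)ᵀ) i j =
      (n - #{i, j}).choose (2 - #{i, j}) := by
    simp only [pairIncidence, mul_apply, transpose_apply, of_apply, mul_ite, mul_one, mul_zero,
      ← ite_and]
    rw [← sum_subtype _ (fun s => mem_powersetCard_univ) (fun s : Finset (Fin n) =>
        if j ∈ s ∧ i ∈ s then (1 : R) else 0), sum_boole]
    have hchoose := card_filter_powersetCard_subset {i, j} univ 2 (subset_univ _) card_le_two
    rw [card_univ, Fintype.card_fin] at hchoose
    rw [← hchoose]
    congr 3
    ext s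
    simp [insert_subset_iff, and_comm]
  rw [hcount]
  by_cases hij : i = j
  · subst hij
    simp only [mem_singleton, insert_eq_of_mem, card_singleton, Nat.add_one_sub_one,
      Nat.choose_one_right, Nat.cast_sub (Fin.pos i), Nat.cast_one, vecMulVec_one, scalar_apply,
      Matrix.add_apply, replicateCol_apply, Pi.one_apply, diagonal_apply_eq]
    ring
  · simp [hij, card_pair hij]

variable {n}

theorem charpoly_two_nsmul_pairIncidence_transpose_mul_self (hn : 3 ≤ n) :
    (2 • ((pairIncidence R n)ᵀ * pairIncidence R n)).charpoly =
      X ^ (n * (n - 3) / 2) * (X - C (2 * (n : R) - 4)) ^ (n - 1) *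
        (X - C (4 * (n : R) - 4)) := by
  have hcard : Fintype.card (TwoSubset n) = n * (n - 3) / 2 + n := by
    rw [Fintype.card_finset_len, Fintype.card_fin, Nat.choose_two_eq_of_three_le hn]
  have hgram : pairIncidence R n * (2 • (pairIncidence R n)ᵀ) =
      vecMulVec (2 • 1) 1 + scalar _ (2 • ((n : R) - 2)) := by
    rw [Matrix.mul_smul, pairIncidence_mul_transpose, smul_add, smul_vecMulVec, map_nsmul]
  have : Nonempty (Fin n) := ⟨⟨0, by omega⟩⟩
  have hshift : 2 • ((n : R) - 2) = 2 * n - 4 := by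
    rw [nsmul_eq_mul]
    ring
  have htop : (2 • 1 : Fin n → R) ⬝ᵥ 1 + 2 • ((n : R) - 2) = 4 * n - 4 := by
    simp only [dotProduct, Pi.smul_apply, Pi.one_apply, nsmul_eq_mul, mul_one, sum_const,
      card_univ, Fintype.card_fin]
    ring
  rw [← Matrix.smul_mul, charpoly_mul_comm_of_le _ _ (by simp [hcard]), hgram,
    charpoly_vecMulVec_add_scalar, hcard, Fintype.card_fin, Nat.add_sub_cancel, htop, hshift,
    mul_assoc]

theorem charpoly_two_nsmul_triangularAdj (hn : 3 ≤ n) :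
    (2 • triangularAdj R n).charpoly =
      (X + C 4) ^ (n * (n - 3) / 2) * (X - C (2 * (n : R) - 8)) ^ (n - 1) *
        (X - C (4 * (n : R) - 8)) := by
  have hshift : 2 • triangularAdj R n =
      2 • ((pairIncidence R n)ᵀ * pairIncidence R n) - scalar _ 4 := by
    rw [pairIncidence_transpose_mul_self, smul_add, ← map_nsmul, two_nsmul (2 : R),
      two_add_two_eq_four, add_sub_cancel_right]
  have hcomp (a : R) : (X - C a).comp (X + C 4) = X - C (a - 4) := by
    simp only [sub_comp, X_comp, C_comp, C_sub]
    ring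
  rw [hshift, charpoly_sub_scalar, charpoly_two_nsmul_pairIncidence_transpose_mul_self R hn]
  simp only [mul_comp, pow_comp, X_comp, hcomp]
  rw [show 2 * (n : R) - 4 - 4 = 2 * n - 8 by ring, show 4 * (n : R) - 4 - 4 = 4 * n - 8 by ring]

end TriangularGraph

/-- for `n ≥ 4`, the characteristic polynomial of the collinearity graph of
the Fischer space `𝒟_n` is
`(X - (4n-8)) (X - (2n-8))^{n-1} (X + 4)^{n(n-3)/2} X^{n(n-1)/2}`. -/
theorem dn_graph_charpoly (n : ℕ) (hn : 4 ≤ n) :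
    (dnAdj n).charpoly =
      (X - C ((4 * n : ℚ) - 8)) * (X - C ((2 * n : ℚ) - 8)) ^ (n - 1) *
        (X + C 4) ^ (n * (n - 3) / 2) * X ^ (n * (n - 1) / 2) := by
  have hblowup : dnAdj n = (triangularAdj ℚ n).submatrix Prod.fst Prod.fst := rfl
  rw [hblowup, charpoly_submatrix_fst, Fintype.card_units_int,
    charpoly_two_nsmul_triangularAdj ℚ (by omega), Fintype.card_finset_len, Fintype.card_fin,
    Nat.choose_two_right]
  ring
end

section
/- Let n ≥ 1, let V = (ℤ/3)^n, and let G = V ⋊ C₂ be the semidirect product in which the nontrivial element of C₂ acts on V by negation. Then the involutions of G are exactly the elements (v,σ) with σ the nontrivial element of C₂; moreover, for any subgroup W ≤ V of index 3 and H = {(w,σ) : w ∈ W, σ ∈ C₂} ≤ G, and any two involutions t, s ∈ G ∖ H, there exists h ∈ H with h·t·h⁻¹ = s. (This is the very-regularity statement for the maximal parabolic 3^{n−1}:2 in the 3-transposition group 3^n:2.) -/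
/-- The elementary abelian group `3^n`, written multiplicatively. -/
abbrev V3 (n : ℕ) : Type := Multiplicative (Fin n → ZMod 3)

/-- The inversion (negation) automorphism of `3^n`. -/
def negAut (n : ℕ) : MulAut (V3 n) := MulEquiv.inv (V3 n)

theorem negAut_sq (n : ℕ) : negAut n * negAut n = 1 := by
  ext x
  simp [negAut]

/-- The action of `C₂ = ℤ/2` on `3^n` in which the nontrivial element acts by
negation. -/
def negAction (n : ℕ) : Multiplicative (ZMod 2) →* MulAut (V3 n) where
  toFun a := if Multiplicative.toAdd a = 0 then 1 else negAut n
  map_one' := by simp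
  map_mul' a b := by
    have h : ∀ x : ZMod 2, x = 0 ∨ x = 1 := by decide
    have h11 : (1 + 1 : ZMod 2) = 0 := by decide
    rcases h (Multiplicative.toAdd a) with ha | ha <;>
      rcases h (Multiplicative.toAdd b) with hb | hb <;>
      simp [toAdd_mul, ha, hb, h11, negAut_sq]

theorem negAction_mem (n : ℕ) (W : Subgroup (V3 n)) (a : Multiplicative (ZMod 2))
    (v : V3 n) (hv : v ∈ W) : negAction n a v ∈ W := by
  simp only [negAction, MonoidHom.coe_mk, OneHom.coe_mk]
  split_ifs <;> simp [hv, W.inv_mem hv, negAut]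

/-- The "parabolic" subgroup `{(w, σ) : w ∈ W, σ ∈ C₂}` of `3^n : 2` attached to a
subgroup `W ≤ 3^n`. -/
def parab (n : ℕ) (W : Subgroup (V3 n)) :
    Subgroup (V3 n ⋊[negAction n] Multiplicative (ZMod 2)) where
  carrier := {g | g.left ∈ W}
  one_mem' := by
    show (1 : V3 n ⋊[negAction n] Multiplicative (ZMod 2)).left ∈ W
    simp [W.one_mem]
  mul_mem' := by
    intro a b ha hb
    show (a * b).left ∈ W
    rw [SemidirectProduct.mul_left]
    exact W.mul_mem ha (negAction_mem n W _ _ hb)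
  inv_mem' := by
    intro a ha
    show a⁻¹.left ∈ W
    rw [SemidirectProduct.inv_left]
    exact negAction_mem n W _ _ (W.inv_mem ha)

/-! An element `(v, σ)` of `3^n : 2` squares to `(v · σ v, σ²)`. For `σ = 1` this is `(v², 1)`,
trivial only for `v = 1` as `3^n` has odd exponent; for `σ ≠ 1` it is `(v v⁻¹, 1) = 1`. So the
involutions are the `(v, σ)` with `σ ≠ 1`, and conjugating one by `(u, 1)` or `(u, σ)` gives
`(u² v, σ)` or `(u² v⁻¹, σ)`. For involutions `(v, σ)`, `(v', σ)` outside `H` the elements `v, v'`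
are nontrivial in `3^n / W ≅ ℤ/3`, so `v' v⁻¹ ∈ W` or `v' v ∈ W`; as squaring is bijective on
`W`, one of these conjugations by an element of `H` carries the first involution to the second. -/

theorem eq_or_eq_inv_of_card_eq_three {Q : Type*} [Group Q] (hQ : Nat.card Q = 3) {a b : Q}
    (ha : a ≠ 1) (hb : b ≠ 1) : b = a ∨ b = a⁻¹ := by
  have : Fact (Nat.Prime 3) := ⟨Nat.prime_three⟩
  have : Finite Q := Nat.finite_of_card_ne_zero (by omega)
  have h3 : a ^ 3 = 1 := hQ ▸ pow_card_eq_one'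
  have hord : orderOf a = 3 := orderOf_eq_prime h3 ha
  classical
  have hmem := mem_zpowers_of_prime_card hQ ha (g' := b)
  rw [mem_zpowers_iff_mem_range_orderOf, hord, show Finset.range 3 = {0, 1, 2} from rfl] at hmem
  simp only [Finset.image_insert, Finset.image_singleton, Finset.mem_insert,
    Finset.mem_singleton, pow_zero, pow_one] at hmem
  rcases hmem with rfl | rfl | rfl
  · exact absurd rfl hb
  · exact .inl rfl
  · exact .inr (eq_inv_of_mul_eq_one_left (by rwa [← pow_succ]))

theorem Subgroup.div_mem_or_mul_mem_of_index_eq_three {G : Type*} [Group G] {W : Subgroup G}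
    [W.Normal] (hW : W.index = 3) {v w : G} (hv : v ∉ W) (hw : w ∉ W) :
    w / v ∈ W ∨ w * v ∈ W := by
  have hQ : Nat.card (G ⧸ W) = 3 := by rw [← Subgroup.index_eq_card, hW]
  have hne : ∀ {x : G}, x ∉ W → (x : G ⧸ W) ≠ 1 :=
    fun hx h => hx ((QuotientGroup.eq_one_iff _).mp h)
  rcases eq_or_eq_inv_of_card_eq_three hQ (hne hv) (hne hw) with h | h
  · exact .inl (QuotientGroup.eq_iff_div_mem.mp h)
  · right
    rw [← QuotientGroup.mk_inv, QuotientGroup.eq_iff_div_mem, div_inv_eq_mul] at h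
    exact h

namespace V3

variable {n : ℕ}

theorem pow_three (x : V3 n) : x ^ 3 = 1 := by
  apply Multiplicative.toAdd.injective
  funext i
  simp only [toAdd_pow, toAdd_one, Pi.smul_apply, Pi.zero_apply, nsmul_eq_mul]
  rw [show ((3 : ℕ) : ZMod 3) = 0 from rfl, zero_mul]

theorem eq_one_of_sq_eq_one {x : V3 n} (hx : x ^ 2 = 1) : x = 1 := by
  rw [← pow_three x, pow_succ, hx, one_mul]

theorem sq_sq (x : V3 n) : (x ^ 2) ^ 2 = x := by
  rw [← pow_mul, show 2 * 2 = 3 + 1 from rfl, pow_succ, pow_three, one_mul]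

end V3

theorem negAction_apply_of_ne_one {n : ℕ} {a : Multiplicative (ZMod 2)} (ha : a ≠ 1)
    (x : V3 n) : negAction n a x = x⁻¹ := by
  have : Multiplicative.toAdd a ≠ 0 := ha
  simp only [negAction, MonoidHom.coe_mk, OneHom.coe_mk, if_neg this]
  rfl

theorem zmod_two_mul_self (a : Multiplicative (ZMod 2)) : a * a = 1 := by
  revert a; decide

theorem zmod_two_eq_of_ne_one {a b : Multiplicative (ZMod 2)} (ha : a ≠ 1) (hb : b ≠ 1) :
    a = b := by
  revert a b; decide

local notation "G₃" n:max => V3 n ⋊[negAction n] Multiplicative (ZMod 2)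

section

variable {n : ℕ}

theorem mul_self_eq_one_of_right_ne_one {g : G₃ n} (hg : g.right ≠ 1) : g * g = 1 := by
  ext : 1
  · simp only [SemidirectProduct.mul_left, negAction_apply_of_ne_one hg, mul_inv_cancel,
      SemidirectProduct.one_left]
  · exact zmod_two_mul_self _

theorem eq_one_of_mul_self_eq_one_of_right_eq_one {g : G₃ n} (hgg : g * g = 1)
    (hg : g.right = 1) : g = 1 := by
  have hl := congrArg SemidirectProduct.left hgg
  simp only [SemidirectProduct.mul_left, hg, map_one, MulAut.one_apply,
    SemidirectProduct.one_left] at hl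
  ext : 1
  · exact V3.eq_one_of_sq_eq_one (by rwa [sq])
  · exact hg

theorem mul_self_eq_one_and_ne_one_iff (g : G₃ n) : (g * g = 1 ∧ g ≠ 1) ↔ g.right ≠ 1 :=
  ⟨fun ⟨hgg, hg⟩ hr => hg (eq_one_of_mul_self_eq_one_of_right_eq_one hgg hr),
    fun hr => ⟨mul_self_eq_one_of_right_ne_one hr, fun h => hr (h ▸ rfl)⟩⟩

theorem conj_of_right_ne_one (u : V3 n) (τ : Multiplicative (ZMod 2)) {t : G₃ n}
    (ht : t.right ≠ 1) :
    (⟨u, τ⟩ : G₃ n) * t * (⟨u, τ⟩ : G₃ n)⁻¹ = ⟨u ^ 2 * negAction n τ t.left, t.right⟩ := by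
  ext : 1
  · rw [SemidirectProduct.mul_left, SemidirectProduct.mul_left, SemidirectProduct.mul_right,
      SemidirectProduct.inv_left, ← MulAut.mul_apply, ← map_mul, mul_comm τ,
      mul_inv_cancel_right, negAction_apply_of_ne_one ht, inv_inv, mul_right_comm, ← sq]
  · rw [SemidirectProduct.mul_right, SemidirectProduct.mul_right, SemidirectProduct.inv_right,
      mul_comm τ, mul_inv_cancel_right]

theorem exists_parab_conj_eq {W : Subgroup (V3 n)} {t s : G₃ n} (ht : t.right ≠ 1)
    (hts : t.right = s.right) (hW : s.left / t.left ∈ W ∨ s.left * t.left ∈ W) :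
    ∃ h ∈ parab n W, h * t * h⁻¹ = s := by
  -- Squaring is an involution of `3^n`, so `c ∈ W` is the square of `c ^ 2 ∈ W`.
  rcases hW with hdiv | hmul
  · refine ⟨⟨(s.left / t.left) ^ 2, 1⟩, W.pow_mem hdiv 2, ?_⟩
    rw [conj_of_right_ne_one _ _ ht, V3.sq_sq, map_one, MulAut.one_apply, div_mul_cancel]
    exact SemidirectProduct.ext rfl hts
  · refine ⟨⟨(s.left * t.left) ^ 2, t.right⟩, W.pow_mem hmul 2, ?_⟩
    rw [conj_of_right_ne_one _ _ ht, V3.sq_sq, negAction_apply_of_ne_one ht,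
      mul_inv_cancel_right]
    exact SemidirectProduct.ext rfl hts

end

theorem three_power_two_very_regular_general (n : ℕ) :
    (∀ g : V3 n ⋊[negAction n] Multiplicative (ZMod 2),
        (g * g = 1 ∧ g ≠ 1) ↔ g.right ≠ 1) ∧
      ∀ W : Subgroup (V3 n), W.index = 3 →
        ∀ t s : V3 n ⋊[negAction n] Multiplicative (ZMod 2),
          t * t = 1 → t ≠ 1 → s * s = 1 → s ≠ 1 →
          t ∉ parab n W → s ∉ parab n W →
          ∃ h ∈ parab n W, h * t * h⁻¹ = s := by
  refine ⟨mul_self_eq_one_and_ne_one_iff, fun W hW t s htt ht hss hs htW hsW => ?_⟩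
  have htr : t.right ≠ 1 := (mul_self_eq_one_and_ne_one_iff t).mp ⟨htt, ht⟩
  have hsr : s.right ≠ 1 := (mul_self_eq_one_and_ne_one_iff s).mp ⟨hss, hs⟩
  exact exists_parab_conj_eq htr (zmod_two_eq_of_ne_one htr hsr)
    (W.div_mem_or_mul_mem_of_index_eq_three hW htW hsW)

/-- in `G = 3^n : 2` (the semidirect product `V ⋊ C₂` with `C₂` acting by
negation on `V = (ℤ/3)^n`), the involutions are exactly the elements with nontrivial
`C₂`-component; and for any index-3 subgroup `W ≤ V`, the subgroup
`H = {(w, σ) : w ∈ W}` acts transitively by conjugation on the involutions outside `H`. -/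
theorem three_power_two_very_regular (n : ℕ) (hn : 1 ≤ n) :
    (∀ g : V3 n ⋊[negAction n] Multiplicative (ZMod 2),
        (g * g = 1 ∧ g ≠ 1) ↔ g.right ≠ 1) ∧
      ∀ W : Subgroup (V3 n), W.index = 3 →
        ∀ t s : V3 n ⋊[negAction n] Multiplicative (ZMod 2),
          t * t = 1 → t ≠ 1 → s * s = 1 → s ≠ 1 →
          t ∉ parab n W → s ∉ parab n W →
          ∃ h ∈ parab n W, h * t * h⁻¹ = s :=
  three_power_two_very_regular_general n
end

section
/- Let n ≥ 2 and define a map φ from T_n × ℤ/2 to the permutations of {1,…,n+1} × ℤ/2 by φ(t,ε)(i,δ) = (t(i), δ+ε) if t(i) ≠ i, and φ(t,ε)(i,δ) = (i,δ) if t(i) = i. Then: (a) φ is injective and each φ(t,ε) is an involution; (b) if (s,ε) ≠ (t,η) and s ∼ t then φ(s,ε)·φ(t,η)·φ(s,ε) = φ(s·t·s, ε+η); (c) if (s,ε) ≠ (t,η) and s,t are not collinear (i.e. s = t or s,t have disjoint supports), then φ(s,ε) and φ(t,η) commute. (This identifies the double graph 𝒜_n^± of the Fischer space of Sym(n+1)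 with the set of reflections of the Weyl group of type D_{n+1}, realized as signed permutations, so that 𝒜_n^± ≅ 𝒟_{n+1}.) -/
open Equiv

/-- The signed permutation of `{1, …, n+1} × ℤ/2` attached to a point `(t, ε)` of the
double graph `𝒜_n^±`: it maps `(i, δ)` to `(t(i), δ + ε)` if `t` moves `i`, and fixes
`(i, δ)` otherwise. -/
def dblPerm {n : ℕ} (t : Tr n) (ε : ZMod 2) : Equiv.Perm (Fin (n + 1) × ZMod 2) :=
  Function.Involutive.toPerm
    (fun p => if t.1 p.1 = p.1 then p else (t.1 p.1, p.2 + ε))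
    (by
      intro p
      by_cases h : t.1 p.1 = p.1
      · simp [h]
      · have hsq : t.1 (t.1 p.1) = p.1 := by
          obtain ⟨x, y, hxy, ht⟩ := t.2
          rw [ht]; exact Equiv.swap_apply_self _ _ _
        have h2 : ¬ t.1 (t.1 p.1) = t.1 p.1 := fun hc => h (t.1.injective hc)
        simp only [if_neg h, if_neg h2, hsq]
        rw [if_neg (fun hc => h hc.symm), add_assoc, CharTwo.add_self_eq_zero, add_zero])

lemma dblPerm_apply {n : ℕ} (t : Tr n) (ε : ZMod 2) (p : Fin (n+1) × ZMod 2) :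
    dblPerm t ε p = if t.1 p.1 = p.1 then p else (t.1 p.1, p.2 + ε) := rfl

lemma zz2 : ∀ δ ε : ZMod 2, δ + ε + ε = δ := by decide

lemma tr_sq {n : ℕ} (s : Tr n) (i : Fin (n+1)) : s.1 (s.1 i) = i := by
  obtain ⟨x, y, hxy, hs⟩ := s.2
  rw [hs]; exact Equiv.swap_apply_self _ _ _

lemma pair_inter_singleton {m : ℕ} {a b x y : Fin m} (ha : a = x ∨ a = y)
    (hb : ¬(b = x ∨ b = y)) : ({a, b} : Finset (Fin m)) ∩ {x, y} = {a} := by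
  ext z
  simp only [Finset.mem_inter, Finset.mem_insert, Finset.mem_singleton]
  constructor
  · rintro ⟨rfl | rfl, h2⟩
    · rfl
    · exact absurd h2 hb
  · rintro rfl; exact ⟨Or.inl rfl, ha⟩

lemma coll_structure {n : ℕ} {s t : Tr n} (h : Coll s t) :
    ∃ a b c : Fin (n+1), a ≠ b ∧ b ≠ c ∧ a ≠ c ∧ s.1 = swap a b ∧ t.1 = swap b c := by
  obtain ⟨a, b, hab, hs⟩ := s.2
  obtain ⟨x, y, hxy, ht⟩ := t.2
  have h' : (({a, b} : Finset (Fin (n+1))) ∩ {x, y}).card = 1 := by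
    rw [Coll, hs, ht, Perm.support_swap hab, Perm.support_swap hxy] at h
    exact h
  obtain ⟨u, hu⟩ := Finset.card_eq_one.mp h'
  have mem : ∀ z : Fin (n+1), ((z = a ∨ z = b) ∧ (z = x ∨ z = y)) ↔ z = u := by
    intro z
    simpa using Finset.ext_iff.mp hu z
  by_cases hbx : b = x
  · by_cases hay : a = y
    · exact absurd (((mem a).mp ⟨Or.inl rfl, Or.inr hay⟩).trans
        ((mem b).mp ⟨Or.inr rfl, Or.inl hbx⟩).symm) hab
    · exact ⟨a, b, y, hab, hbx ▸ hxy, hay, hs, by rw [ht, hbx]⟩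
  · by_cases hby : b = y
    · by_cases hax : a = x
      · exact absurd (((mem a).mp ⟨Or.inl rfl, Or.inl hax⟩).trans
          ((mem b).mp ⟨Or.inr rfl, Or.inr hby⟩).symm) hab
      · exact ⟨a, b, x, hab, hby ▸ (Ne.symm hxy), hax, hs, by rw [ht, swap_comm, hby]⟩
    · have hub : ¬ u = b := fun hc => (hbx ∘ (hc ▸ ·)) (((mem u).mpr rfl).2.resolve_right
        (fun hy => hby (hc ▸ hy)))
      have hua : u = a := (((mem u).mpr rfl).1).resolve_right hub
      have haxy : a = x ∨ a = y := hua ▸ ((mem u).mpr rfl).2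
      rcases haxy with hax | hay
      · exact ⟨b, a, y, Ne.symm hab, hax ▸ hxy, hby, by rw [hs, swap_comm], by rw [ht, hax]⟩
      · exact ⟨b, a, x, Ne.symm hab, fun hc => hxy (hc ▸ hay), hbx,
          by rw [hs, swap_comm], by rw [ht, swap_comm, hay]⟩

lemma conj_eq {n : ℕ} (s t u : Tr n) (ε η : ZMod 2) (h : Coll s t)
    (hu : u.1 = s.1 * t.1 * s.1) :
    dblPerm s ε * dblPerm t η * dblPerm s ε = dblPerm u (ε + η) := by
  obtain ⟨a, b, c, hab, hbc, hac, hs, ht⟩ := coll_structure h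
  apply Equiv.ext
  rintro ⟨i, δ⟩
  simp only [Perm.mul_apply, dblPerm_apply, hu, hs, ht]
  by_cases hia : i = a
  · subst hia
    simp [swap_apply_def, hab, hbc, hac, hab.symm, hbc.symm, hac.symm, add_assoc]
  · by_cases hib : i = b
    · subst hib
      simp [swap_apply_def, hab, hbc, hac, hab.symm, hbc.symm, hac.symm, zz2]
    · by_cases hic : i = c
      · subst hic
        simp only [swap_apply_def, if_neg hac, if_neg (Ne.symm hbc), if_neg hab,
          if_neg (Ne.symm hab), if_pos rfl, if_neg hbc, ite_self]
        simp [swap_apply_def, hab, hbc, hac, hab.symm, hbc.symm, hac.symm]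
        ring
      · simp [swap_apply_def, hia, hib, hic]

lemma commute_eq {n : ℕ} (s t : Tr n) (ε η : ZMod 2)
    (h : s.1 = t.1 ∨ Disjoint s.1.support t.1.support) :
    Commute (dblPerm s ε) (dblPerm t η) := by
  apply Equiv.ext
  rintro ⟨i, δ⟩
  simp only [Perm.mul_apply, dblPerm_apply]
  rcases h with h | h
  · by_cases hi : s.1 i = i
    · simp [hi, h ▸ hi, ← h]
    · have h2 : s.1 (s.1 i) = i := by
        obtain ⟨x, y, hxy, hs⟩ := s.2
        rw [hs]; exact Equiv.swap_apply_self _ _ _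
      have h3 : ¬ s.1 (s.1 i) = s.1 i := fun hc => hi (s.1.injective hc)
      simp only [← h, if_neg hi, if_neg h3, h2, if_neg (Ne.symm hi)] -- careful
      rw [add_right_comm]
  · have hd : ∀ j : Fin (n+1), ¬ s.1 j = j → t.1 j = j := by
      intro j hj
      by_contra hj2
      exact Finset.disjoint_left.mp h (Perm.mem_support.mpr hj) (Perm.mem_support.mpr hj2)
    by_cases hi : s.1 i = i
    · by_cases hti : t.1 i = i
      · simp [hi, hti]
      · have : s.1 (t.1 i) = t.1 i := by
          by_contra hc
          exact hti (t.1.injective (by rw [hd _ hc]))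
        simp [hi, hti, this]
    · have hti : t.1 i = i := hd i hi
      have : t.1 (s.1 i) = s.1 i := hd _ (by
        rw [tr_sq]; exact fun hc => hi hc.symm)
      simp [hi, hti, this]

lemma dblPerm_sq {n : ℕ} (t : Tr n) (ε : ZMod 2) : dblPerm t ε * dblPerm t ε = 1 := by
  apply Equiv.ext
  intro p
  simp only [Perm.mul_apply, dblPerm_apply, Perm.coe_one, id_eq]
  by_cases h : t.1 p.1 = p.1
  · simp [h]
  · have h2 : ¬ t.1 (t.1 p.1) = t.1 p.1 := by
      rw [tr_sq]; exact fun hc => h hc.symm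
    simp [h, h2, tr_sq, zz2]
    exact fun hc => absurd hc.symm h

lemma dblPerm_ne_one {n : ℕ} (t : Tr n) (ε : ZMod 2) : dblPerm t ε ≠ 1 := by
  intro h
  obtain ⟨a, b, hab, ht⟩ := t.2
  have hta : t.1 a = b := by rw [ht]; exact swap_apply_left a b
  have h1 := Equiv.ext_iff.mp h (a, 0)
  rw [dblPerm_apply] at h1
  simp only [hta, Perm.coe_one, id_eq] at h1
  rw [if_neg (Ne.symm hab)] at h1
  exact (Ne.symm hab) (congrArg Prod.fst h1)

lemma dblPerm_injective {n : ℕ} :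
    Function.Injective (fun p : Tr n × ZMod 2 => dblPerm p.1 p.2) := by
  rintro ⟨s, ε⟩ ⟨t, η⟩ hpq
  simp only at hpq
  obtain ⟨a, b, hab, hs⟩ := s.2
  obtain ⟨x, y, hxy, ht⟩ := t.2
  have hsa : s.1 a = b := by rw [hs]; exact swap_apply_left a b
  have h1 := Equiv.ext_iff.mp hpq (a, 0)
  rw [dblPerm_apply, dblPerm_apply] at h1
  simp only [hsa] at h1
  rw [if_neg (Ne.symm hab)] at h1
  by_cases hta : t.1 a = a
  · rw [if_pos hta] at h1
    exact absurd (congrArg Prod.fst h1) (Ne.symm hab)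
  · rw [if_neg hta] at h1
    have h1a : b = t.1 a := congrArg Prod.fst h1
    have hee : ε = η := by
      have := congrArg Prod.snd h1
      simpa using this
    have hst : s.1 = t.1 := by
      rw [hs, ht]
      rw [ht] at hta h1a
      by_cases hax : a = x
      · subst hax
        have hby : b = y := by simpa [swap_apply_left] using h1a
        subst hby; rfl
      · have hay : a = y := by
          by_contra hay
          exact hta (swap_apply_of_ne_of_ne hax hay)
        subst hay
        have hbx : b = x := by simpa [swap_apply_right] using h1a
        subst hbx
        exact swap_comm a b
    rw [Prod.mk.injEq]
    exact ⟨Subtype.ext hst, hee⟩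

lemma not_coll {n : ℕ} {s t : Tr n} (h : ¬ Coll s t) :
    s.1 = t.1 ∨ Disjoint s.1.support t.1.support := by
  obtain ⟨a, b, hab, hs⟩ := s.2
  obtain ⟨x, y, hxy, ht⟩ := t.2
  rw [Coll, hs, ht, Perm.support_swap hab, Perm.support_swap hxy] at h
  rw [hs, ht, Perm.support_swap hab, Perm.support_swap hxy]
  by_cases hax : a = x ∨ a = y
  · by_cases hbxy : b = x ∨ b = y
    · left
      rcases hax with rfl | rfl
      · rcases hbxy with rfl | rfl
        · exact absurd rfl hab
        · rfl
      · rcases hbxy with rfl | rfl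
        · exact swap_comm b a ▸ rfl
        · exact absurd rfl hab
    · exact absurd (by rw [pair_inter_singleton hax hbxy]; simp) h
  · by_cases hbxy : b = x ∨ b = y
    · exact absurd (by rw [Finset.pair_comm, pair_inter_singleton hbxy hax]; simp) h
    · right
      rw [Finset.disjoint_left]
      intro z hz hz2
      simp only [Finset.mem_insert, Finset.mem_singleton] at hz hz2
      rcases hz with rfl | rfl
      · exact hax hz2
      · exact hbxy hz2

/-- the map `φ : (t, ε) ↦ dblPerm t ε` identifies the double graph
`𝒜_n^±` of the Fischer space of `Sym(n+1)` with a set of involutions (the reflections of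
the Weyl group of type `D_{n+1}` realized as signed permutations): `φ` is injective with
involutive values, conjugation realizes the lines of `𝒜_n^±`, and points on no common
line give commuting involutions. -/
theorem double_graph_An_is_Dn (n : ℕ) (hn : 2 ≤ n) :
    (Function.Injective (fun p : Tr n × ZMod 2 => dblPerm p.1 p.2) ∧
      ∀ (t : Tr n) (ε : ZMod 2), dblPerm t ε * dblPerm t ε = 1 ∧ dblPerm t ε ≠ 1) ∧
    (∀ (s t : Tr n) (ε η : ZMod 2), (s, ε) ≠ (t, η) → Coll s t →
      dblPerm s ε * dblPerm t η * dblPerm s ε =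
        dblPerm ⟨s.1 * t.1 * s.1, by
          obtain ⟨x, y, hxy, ht⟩ := t.2
          obtain ⟨a, b, hab, hs⟩ := s.2
          have hinv : s.1⁻¹ = s.1 := by rw [hs]; exact Equiv.swap_inv a b
          exact ⟨s.1 x, s.1 y, fun h => hxy (s.1.injective h), by
            rw [ht, Equiv.swap_apply_apply, hinv]⟩⟩ (ε + η)) ∧
    (∀ (s t : Tr n) (ε η : ZMod 2), (s, ε) ≠ (t, η) → ¬ Coll s t →
      Commute (dblPerm s ε) (dblPerm t η)) := by
  refine ⟨⟨dblPerm_injective, fun t ε => ⟨dblPerm_sq t ε, dblPerm_ne_one t ε⟩⟩, ?_, ?_⟩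
  · intro s t ε η _ hcoll
    exact conj_eq s t _ ε η hcoll rfl
  · intro s t ε η _ hncoll
    exact commute_eq s t ε η (not_coll hncoll)
end
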